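/- arXiv:2401.15643 — 8 statements merged into one kernel-verified Lean document; each statement's English description precedes it below -/
import Mathlib

section
/- Let L be a Heyting algebra and let μ be a fuzzy ideal of L. Then for all x, y ∈ L one has μ(x ⊞ y) = μ(x ⊎ y) = min(μ(x), μ((yᶜ)ᶜ)). -/
variable {L : Type*} [HeytingAlgebra L]

/-- `x ⊎ y := x* ⇨ y` where `x* = xᶜ = x ⇨ ⊥`. -/
def uplus (x y : L) : L := xᶜ ⇨ y

/-- `x ⊞ y := x* ⇨ (y*)*`. -/
def boxplus (x y : L) : L := xᶜ ⇨ yᶜᶜ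

/-- A fuzzy ideal of `L`: a fuzzy subset (values in `[0,1]`) that is antitone and
satisfies `μ(x ⊎ y) ≥ min(μ(x), μ(y))`. -/
def FuzzyIdeal (μ : L → ℝ) : Prop :=
  (∀ x, 0 ≤ μ x ∧ μ x ≤ 1) ∧
  (∀ x y, x ≤ y → μ y ≤ μ x) ∧
  (∀ x y, min (μ x) (μ y) ≤ μ (uplus x y))

lemma le_uplus_left (x y : L) : x ≤ uplus x y := by
  rw [uplus, le_himp_iff]
  simp

lemma le_uplus_right (x y : L) : y ≤ uplus x y :=
  le_himp_iff.mpr inf_le_left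

lemma compl_compl_le_uplus_self (z : L) : zᶜᶜ ≤ uplus z z := by
  rw [uplus, ← himp_bot]
  exact himp_le_himp_left bot_le

lemma fuzzyIdeal_compl_compl (μ : L → ℝ) (hμ : FuzzyIdeal μ) (z : L) :
    μ zᶜᶜ = μ z := by
  obtain ⟨_, hanti, hmin⟩ := hμ
  refine le_antisymm (hanti _ _ le_compl_compl) ?_
  have := (hmin z z).trans (hanti _ _ (compl_compl_le_uplus_self z))
  simpa using this

theorem fuzzyIdeal_boxplus_eq (μ : L → ℝ) (hμ : FuzzyIdeal μ) (x y : L) :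
    μ (boxplus x y) = min (μ x) (μ yᶜᶜ) ∧ μ (uplus x y) = min (μ x) (μ yᶜᶜ) := by
  obtain ⟨hb, hanti, hmin⟩ := hμ
  have hbox : boxplus x y = uplus x yᶜᶜ := rfl
  have hlow : min (μ x) (μ yᶜᶜ) ≤ μ (boxplus x y) := hbox ▸ hmin x yᶜᶜ
  have hup_le_box : uplus x y ≤ boxplus x y := himp_le_himp_left le_compl_compl
  have hcc := fuzzyIdeal_compl_compl μ ⟨hb, hanti, hmin⟩ y
  constructor
  · refine le_antisymm (le_min ?_ ?_) hlow
    · exact hanti _ _ (hbox ▸ le_uplus_left x yᶜᶜ)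
    · exact hanti _ _ (hbox ▸ le_uplus_right x yᶜᶜ)
  · refine le_antisymm (le_min ?_ ?_) (hlow.trans (hanti _ _ hup_le_box))
    · exact hanti _ _ (le_uplus_left x y)
    · rw [hcc]; exact hanti _ _ (le_uplus_right x y)
end

section
/- Let L be a Heyting algebra and μ a fuzzy subset of L. Then μ is a fuzzy ideal of L if and only if the following two conditions hold: (fi₁) for all x, y ∈ L, x ≤ y implies μ(x) ≥ μ(y); and (fi₂′) for all x, y ∈ L, μ(x ⊞ y) ≥ min(μ(x), μ(y)). -/
variable {L : Type*} [HeytingAlgebra L]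

theorem fuzzyIdeal_iff_boxplus (μ : L → ℝ) (hμ : ∀ x, 0 ≤ μ x ∧ μ x ≤ 1) :
    FuzzyIdeal μ ↔
      ((∀ x y : L, x ≤ y → μ y ≤ μ x) ∧
       (∀ x y : L, min (μ x) (μ y) ≤ μ (boxplus x y))) := by
  constructor
  · rintro ⟨-, anti, h2⟩
    refine ⟨anti, fun x y => ?_⟩
    have hcc : μ y ≤ μ (yᶜᶜ) := by
      have h1 : min (μ y) (μ (⊥ : L)) ≤ μ (uplus y ⊥) := h2 y ⊥
      have h3 : μ y ≤ μ (⊥ : L) := anti _ _ bot_le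
      have : uplus y (⊥ : L) = yᶜᶜ := by simp [uplus, himp_bot]
      rw [this] at h1
      exact le_trans (le_min le_rfl h3) h1
    have h4 : min (μ x) (μ (yᶜᶜ)) ≤ μ (uplus x (yᶜᶜ)) := h2 x (yᶜᶜ)
    have : uplus x (yᶜᶜ) = boxplus x y := rfl
    rw [this] at h4
    exact le_trans (min_le_min le_rfl hcc) h4
  · rintro ⟨anti, h2⟩
    refine ⟨hμ, anti, fun x y => ?_⟩
    have hle : uplus x y ≤ boxplus x y := himp_le_himp le_rfl le_compl_compl
    exact le_trans (h2 x y) (anti _ _ hle)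
end

section
/- Let L be a Heyting algebra and μ a fuzzy subset of L. Then μ is a fuzzy ideal of L if and only if for all x, y, z ∈ L with z ≤ x ⊞ y one has μ(z) ≥ min(μ(x), μ(y)). -/
variable {L : Type*} [HeytingAlgebra L]

theorem fuzzyIdeal_iff_le_boxplus (μ : L → ℝ) (hμ : ∀ x, 0 ≤ μ x ∧ μ x ≤ 1) :
    FuzzyIdeal μ ↔
      ∀ x y z : L, z ≤ boxplus x y → min (μ x) (μ y) ≤ μ z := by
  have key : ∀ y : L, uplus y y = yᶜᶜ := by
    intro y
    refine le_antisymm ?_ ?_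
    · rw [uplus, le_compl_iff_disjoint_right, disjoint_iff_inf_le]
      calc (yᶜ ⇨ y) ⊓ yᶜ ≤ y ⊓ yᶜ := le_inf himp_inf_le inf_le_right
        _ ≤ ⊥ := disjoint_iff_inf_le.mp disjoint_compl_right
    · rw [uplus, ← himp_bot (yᶜ)]
      exact himp_le_himp_left bot_le
  constructor
  · rintro ⟨-, hanti, hsum⟩ x y z hz
    have h1 : min (μ x) (μ y) ≤ μ (boxplus x y) := by
      have hyy : μ y ≤ μ (yᶜᶜ) := by
        rw [← key y]; exact (min_self (μ y)).symm.trans_le (hsum y y)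
      have : boxplus x y = uplus x (yᶜᶜ) := rfl
      rw [this]
      exact le_trans (min_le_min le_rfl hyy) (hsum x _)
    exact h1.trans (hanti z _ hz)
  · intro h
    refine ⟨hμ, ?_, ?_⟩
    · intro x y hxy
      have : x ≤ boxplus y y := le_trans hxy (le_trans le_compl_compl le_himp)
      simpa using h y y x this
    · intro x y
      exact h x y _ (himp_le_himp_left le_compl_compl)
end

section
/- Let L be a Heyting algebra and μ a fuzzy subset of L. Then μ is a fuzzy ideal of L if and only if for all x, y, z ∈ L with (x ⊞ y) ⊞ zᶜ = ⊤ one has μ(z) ≥ min(μ(x), μ(y)). -/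
variable {L : Type*} [HeytingAlgebra L]

lemma uplus_bot (a : L) : uplus a ⊥ = aᶜᶜ := by
  simp [uplus, himp_bot]

lemma boxplus_eq_uplus (x y : L) : boxplus x y = uplus x (yᶜᶜ) := rfl

lemma boxplus_top_iff (a b : L) : boxplus a bᶜ = ⊤ ↔ aᶜ ≤ bᶜ := by
  rw [boxplus, himp_eq_top_iff, compl_compl_compl]

theorem fuzzyIdeal_iff_boxplus_compl_top (μ : L → ℝ) (hμ : ∀ x, 0 ≤ μ x ∧ μ x ≤ 1) :
    FuzzyIdeal μ ↔
      ∀ x y z : L, boxplus (boxplus x y) zᶜ = ⊤ → min (μ x) (μ y) ≤ μ z := by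
  constructor
  · rintro ⟨h0, hanti, hup⟩ x y z htop
    rw [boxplus_top_iff] at htop
    have hz : z ≤ (boxplus x y)ᶜᶜ := by
      calc z ≤ zᶜᶜ := le_compl_compl
        _ ≤ (boxplus x y)ᶜᶜ := compl_anti htop
    have hcc : ∀ a : L, μ a ≤ μ (aᶜᶜ) := by
      intro a
      have h1 := hup a ⊥
      rw [uplus_bot] at h1
      have h2 : μ a ≤ μ ⊥ := hanti ⊥ a bot_le
      calc μ a = min (μ a) (μ ⊥) := (min_eq_left h2).symm
        _ ≤ μ (aᶜᶜ) := h1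
    calc min (μ x) (μ y) ≤ min (μ x) (μ (yᶜᶜ)) := by
          exact min_le_min le_rfl (hcc y)
      _ ≤ μ (uplus x (yᶜᶜ)) := hup x (yᶜᶜ)
      _ = μ (boxplus x y) := by rw [boxplus_eq_uplus]
      _ ≤ μ ((boxplus x y)ᶜᶜ) := hcc _
      _ ≤ μ z := hanti _ _ hz
  · intro h
    refine ⟨hμ, ?_, ?_⟩
    · intro x y hxy
      have hcond : boxplus (boxplus y y) xᶜ = ⊤ := by
        rw [boxplus_top_iff]
        calc (boxplus y y)ᶜ ≤ yᶜᶜᶜ := compl_anti le_himp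
          _ = yᶜ := compl_compl_compl y
          _ ≤ xᶜ := compl_anti hxy
      simpa using h y y x hcond
    · intro x y
      have hcond : boxplus (boxplus x y) (uplus x y)ᶜ = ⊤ := by
        rw [boxplus_top_iff]
        exact compl_anti (himp_le_himp_left le_compl_compl)
      exact h x y (uplus x y) hcond
end

section
/- Let L be a Heyting algebra and μ a fuzzy subset of L. Then the function μ′ : L → ℝ defined by μ′(x) = sup { min(μ(x₁), …, μ(xₙ)) : n ≥ 1, x₁, …, xₙ ∈ L, x ≤ x₁ ⊞ ⋯ ⊞ xₙ } is a fuzzy ideal of L. -/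
variable {L : Type*} [HeytingAlgebra L]

/-- `x₁ ⊞ x₂ ⊞ ⋯ ⊞ xₙ` for a nonempty list `[x₁, …, xₙ]` (junk value `⊥` on `[]`). -/
def boxFold : List L → L
  | [] => ⊥
  | [a] => a
  | a :: l => boxplus a (boxFold l)

/-- `min(t₁, …, tₙ)` for a nonempty list `[t₁, …, tₙ]` of reals (junk value `1` on `[]`). -/
def minFold : List ℝ → ℝ
  | [] => 1
  | [a] => a
  | a :: l => min a (minFold l)

/-- `μ′(x) = sup { min(μ(x₁), …, μ(xₙ)) : n ≥ 1, x ≤ x₁ ⊞ ⋯ ⊞ xₙ }`. -/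
noncomputable def fuzzyGen (μ : L → ℝ) (x : L) : ℝ :=
  sSup {t : ℝ | ∃ l : List L, l ≠ [] ∧ x ≤ boxFold l ∧ t = minFold (l.map μ)}

/-!
In a Heyting algebra `x ⊞ y = (x ⊔ y)ᶜᶜ`, so `⊞` is associative and monotone, and
`x ⊎ y ≤ x ⊞ y` since `y ≤ yᶜᶜ`. Hence if `x ≤ x₁ ⊞ ⋯ ⊞ xₙ` and `y ≤ y₁ ⊞ ⋯ ⊞ yₘ`, the
concatenated list witnesses `x ⊎ y ≤ x₁ ⊞ ⋯ ⊞ xₙ ⊞ y₁ ⊞ ⋯ ⊞ yₘ` with value the minimum of the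
two values, and taking suprema gives `(fi₂)`. Antitonicity and the bounds `[0, 1]` are immediate.
-/

theorem boxplus_eq_compl_compl_sup (a b : L) : boxplus a b = (a ⊔ b)ᶜᶜ := by
  rw [compl_sup, ← himp_bot (aᶜ ⊓ bᶜ), ← himp_himp, himp_bot]
  rfl

theorem compl_compl_sup_compl_compl_left (a b : L) : (aᶜᶜ ⊔ b)ᶜᶜ = (a ⊔ b)ᶜᶜ := by
  rw [compl_sup, compl_sup, compl_compl_compl]

theorem compl_compl_sup_compl_compl_right (a b : L) : (a ⊔ bᶜᶜ)ᶜᶜ = (a ⊔ b)ᶜᶜ := by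
  rw [compl_sup, compl_sup, compl_compl_compl]

theorem boxplus_assoc (a b c : L) : boxplus (boxplus a b) c = boxplus a (boxplus b c) := by
  simp only [boxplus_eq_compl_compl_sup, compl_compl_sup_compl_compl_left,
    compl_compl_sup_compl_compl_right, sup_assoc]

theorem boxplus_mono {a b c d : L} (hab : a ≤ b) (hcd : c ≤ d) : boxplus a c ≤ boxplus b d :=
  himp_le_himp (compl_le_compl hab) (compl_le_compl (compl_le_compl hcd))

theorem uplus_le_boxplus (a b : L) : uplus a b ≤ boxplus a b :=
  himp_le_himp_left le_compl_compl

theorem boxFold_cons (a : L) {l : List L} (hl : l ≠ []) :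
    boxFold (a :: l) = boxplus a (boxFold l) := by
  cases l with
  | nil => exact absurd rfl hl
  | cons _ _ => rfl

theorem boxFold_append {l m : List L} (hl : l ≠ []) (hm : m ≠ []) :
    boxFold (l ++ m) = boxplus (boxFold l) (boxFold m) := by
  induction l with
  | nil => exact absurd rfl hl
  | cons a l ih =>
    rcases eq_or_ne l [] with rfl | hl'
    · exact boxFold_cons a hm
    · rw [List.cons_append, boxFold_cons a (by simp [hl']), ih hl', boxFold_cons a hl',
        boxplus_assoc]

theorem minFold_cons (a : ℝ) {l : List ℝ} (hl : l ≠ []) :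
    minFold (a :: l) = min a (minFold l) := by
  cases l with
  | nil => exact absurd rfl hl
  | cons _ _ => rfl

theorem minFold_append {l m : List ℝ} (hl : l ≠ []) (hm : m ≠ []) :
    minFold (l ++ m) = min (minFold l) (minFold m) := by
  induction l with
  | nil => exact absurd rfl hl
  | cons a l ih =>
    rcases eq_or_ne l [] with rfl | hl'
    · exact minFold_cons a hm
    · rw [List.cons_append, minFold_cons a (by simp [hl']), ih hl', minFold_cons a hl',
        min_assoc]

theorem minFold_mem {l : List ℝ} (hl : l ≠ []) : minFold l ∈ l := by
  induction l with
  | nil => exact absurd rfl hl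
  | cons a l ih =>
    rcases eq_or_ne l [] with rfl | hl'
    · exact List.mem_singleton_self a
    · rw [minFold_cons a hl']
      rcases min_choice a (minFold l) with h | h <;> rw [h]
      · exact List.mem_cons_self
      · exact List.mem_cons_of_mem a (ih hl')

theorem min_csSup_le_csSup {α : Type*} [ConditionallyCompleteLinearOrder α] {A B C : Set α}
    (hA : A.Nonempty) (hB : B.Nonempty) (hC : BddAbove C) (hmin : ∀ a ∈ A, ∀ b ∈ B, min a b ∈ C) :
    min (sSup A) (sSup B) ≤ sSup C := by
  refine le_of_forall_lt fun w hw => ?_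
  obtain ⟨a, ha, hwa⟩ := exists_lt_of_lt_csSup hA (hw.trans_le (min_le_left _ _))
  obtain ⟨b, hb, hwb⟩ := exists_lt_of_lt_csSup hB (hw.trans_le (min_le_right _ _))
  exact (lt_min hwa hwb).trans_le (le_csSup hC (hmin a ha b hb))

def fuzzyGenSet (μ : L → ℝ) (x : L) : Set ℝ :=
  {t : ℝ | ∃ l : List L, l ≠ [] ∧ x ≤ boxFold l ∧ t = minFold (l.map μ)}

theorem fuzzyGen_eq_sSup (μ : L → ℝ) (x : L) : fuzzyGen μ x = sSup (fuzzyGenSet μ x) := rfl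

theorem apply_mem_fuzzyGenSet (μ : L → ℝ) (x : L) : μ x ∈ fuzzyGenSet μ x :=
  ⟨[x], List.cons_ne_nil x [], le_rfl, rfl⟩

theorem fuzzyGenSet_subset_Icc {μ : L → ℝ} (hμ : ∀ x, 0 ≤ μ x ∧ μ x ≤ 1) (x : L) :
    fuzzyGenSet μ x ⊆ Set.Icc 0 1 := by
  rintro t ⟨l, hl, -, rfl⟩
  obtain ⟨a, -, ha⟩ := List.mem_map.mp (minFold_mem (mt List.map_eq_nil_iff.mp hl))
  exact ha ▸ hμ a

theorem fuzzyGenSet_antitone (μ : L → ℝ) {x y : L} (hxy : x ≤ y) :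
    fuzzyGenSet μ y ⊆ fuzzyGenSet μ x := by
  rintro t ⟨l, hl, hyl, rfl⟩
  exact ⟨l, hl, hxy.trans hyl, rfl⟩

theorem min_mem_fuzzyGenSet_uplus (μ : L → ℝ) {x y : L} {s t : ℝ}
    (hs : s ∈ fuzzyGenSet μ x) (ht : t ∈ fuzzyGenSet μ y) :
    min s t ∈ fuzzyGenSet μ (uplus x y) := by
  obtain ⟨l, hl, hxl, rfl⟩ := hs
  obtain ⟨m, hm, hym, rfl⟩ := ht
  refine ⟨l ++ m, List.append_ne_nil_of_left_ne_nil hl m, ?_, ?_⟩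
  · calc uplus x y ≤ boxplus x y := uplus_le_boxplus x y
      _ ≤ boxplus (boxFold l) (boxFold m) := boxplus_mono hxl hym
      _ = boxFold (l ++ m) := (boxFold_append hl hm).symm
  · rw [List.map_append, minFold_append (mt List.map_eq_nil_iff.mp hl)
      (mt List.map_eq_nil_iff.mp hm)]

theorem fuzzyGen_isFuzzyIdeal (μ : L → ℝ) (hμ : ∀ x, 0 ≤ μ x ∧ μ x ≤ 1) :
    FuzzyIdeal (fuzzyGen μ) := by
  have hne (x : L) : (fuzzyGenSet μ x).Nonempty := ⟨μ x, apply_mem_fuzzyGenSet μ x⟩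
  have hbdd (x : L) : BddAbove (fuzzyGenSet μ x) :=
    bddAbove_Icc.mono (fuzzyGenSet_subset_Icc hμ x)
  refine ⟨fun x => ?_, fun x y hxy => ?_, fun x y => ?_⟩
  · rw [fuzzyGen_eq_sSup]
    exact ⟨(hμ x).1.trans (le_csSup (hbdd x) (apply_mem_fuzzyGenSet μ x)),
      csSup_le (hne x) fun t ht => (fuzzyGenSet_subset_Icc hμ x ht).2⟩
  · exact csSup_le_csSup (hbdd x) (hne y) (fuzzyGenSet_antitone μ hxy)
  · exact min_csSup_le_csSup (hne x) (hne y) (hbdd _) fun s hs t ht =>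
      min_mem_fuzzyGenSet_uplus μ hs ht
end

section
/- Let L be a Heyting algebra and μ₁, μ₂ fuzzy ideals of L. Then there exists a fuzzy ideal ρ of L (the relative pseudocomplement μ₁ ⇝ μ₂) such that for every fuzzy ideal ν of L: min(μ₁(x), ν(x)) ≤ μ₂(x) for all x ∈ L if and only if ν(x) ≤ ρ(x) for all x ∈ L. Consequently the lattice of fuzzy ideals of L is a Heyting algebra. -/
variable {L : Type*} [HeytingAlgebra L]

/-- Key Heyting algebra fact: if `z ≤ x ⊎ y` then `z ≤ (z ⊓ x) ⊎ (z ⊓ y)`. -/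
lemma uplus_inf_self {z x y : L} (h : z ≤ uplus x y) : z ≤ uplus (z ⊓ x) (z ⊓ y) := by
  rw [uplus, le_himp_iff] at h ⊢
  refine le_inf ?_ ?_
  · exact inf_le_left
  · have h1 : z ⊓ (z ⊓ x)ᶜ ⊓ x ≤ ⊥ := by
      calc z ⊓ (z ⊓ x)ᶜ ⊓ x ≤ (z ⊓ x) ⊓ (z ⊓ x)ᶜ := by
            refine le_inf (le_inf ?_ ?_) ?_
            · exact inf_le_left.trans inf_le_left
            · exact inf_le_right
            · exact inf_le_left.trans inf_le_right
        _ ≤ ⊥ := disjoint_compl_right.le_bot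
    have h2 : z ⊓ (z ⊓ x)ᶜ ≤ xᶜ :=
      le_compl_iff_disjoint_right.mpr (disjoint_iff_inf_le.mpr h1)
    calc z ⊓ (z ⊓ x)ᶜ ≤ z ⊓ xᶜ := le_inf inf_le_left h2
      _ ≤ y := h

theorem fuzzyIdeal_heyting (μ₁ μ₂ : L → ℝ) (h₁ : FuzzyIdeal μ₁) (h₂ : FuzzyIdeal μ₂) :
    ∃ ρ : L → ℝ, FuzzyIdeal ρ ∧
      ∀ ν : L → ℝ, FuzzyIdeal ν →
        ((∀ x, min (μ₁ x) (ν x) ≤ μ₂ x) ↔ ∀ x, ν x ≤ ρ x) := by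
  classical
  obtain ⟨hb₁, ha₁, hi₁⟩ := h₁
  obtain ⟨hb₂, ha₂, hi₂⟩ := h₂
  set r : L → ℝ := fun z => if μ₁ z ≤ μ₂ z then 1 else μ₂ z with hr
  have hr0 : ∀ z, 0 ≤ r z := by
    intro z; simp only [hr]; split
    · norm_num
    · exact (hb₂ z).1
  have hr1 : ∀ z, r z ≤ 1 := by
    intro z; simp only [hr]; split
    · exact le_rfl
    · exact (hb₂ z).2
  set ρ : L → ℝ := fun x => sInf (r '' {y | y ≤ x}) with hρ
  have hne : ∀ x : L, (r '' {y | y ≤ x}).Nonempty := fun x => ⟨r x, x, le_refl x, rfl⟩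
  have hbdd : ∀ x : L, BddBelow (r '' {y | y ≤ x}) := by
    intro x
    refine ⟨0, ?_⟩
    rintro t ⟨z, -, rfl⟩
    exact hr0 z
  have hρle : ∀ x z : L, z ≤ x → ρ x ≤ r z := fun x z hz =>
    csInf_le (hbdd x) ⟨z, hz, rfl⟩
  have hleρ : ∀ (x : L) (t : ℝ), (∀ z, z ≤ x → t ≤ r z) → t ≤ ρ x := by
    intro x t h
    refine le_csInf (hne x) ?_
    rintro b ⟨z, hz, rfl⟩
    exact h z hz
  -- key lemma
  have hkey : ∀ z x y : L, z ≤ uplus x y → min (ρ x) (ρ y) ≤ r z := by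
    intro z x y hz
    by_cases hzc : μ₁ z ≤ μ₂ z
    · have : r z = 1 := if_pos hzc
      rw [this]
      exact (min_le_left _ _).trans ((hρle x x le_rfl).trans (hr1 x))
    · have hrz : r z = μ₂ z := if_neg hzc
      rw [hrz]
      have hz' := uplus_inf_self hz
      have hμ₂ : min (μ₂ (z ⊓ x)) (μ₂ (z ⊓ y)) ≤ μ₂ z :=
        (hi₂ _ _).trans (ha₂ _ _ hz')
      rcases le_total (μ₂ (z ⊓ x)) (μ₂ (z ⊓ y)) with hxy | hxy
      · -- min = μ₂ (z ⊓ x) ≤ μ₂ z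
        have hle : μ₂ (z ⊓ x) ≤ μ₂ z := by
          rw [min_eq_left hxy] at hμ₂; exact hμ₂
        by_cases hc : μ₁ (z ⊓ x) ≤ μ₂ (z ⊓ x)
        · exact absurd (((ha₁ _ _ inf_le_left).trans hc).trans hle) hzc
        · have : r (z ⊓ x) = μ₂ (z ⊓ x) := if_neg hc
          exact (min_le_left _ _).trans ((hρle x _ inf_le_right).trans (this ▸ hle))
      · have hle : μ₂ (z ⊓ y) ≤ μ₂ z := by
          rw [min_eq_right hxy] at hμ₂; exact hμ₂
        by_cases hc : μ₁ (z ⊓ y) ≤ μ₂ (z ⊓ y)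
        · exact absurd (((ha₁ _ _ inf_le_left).trans hc).trans hle) hzc
        · have : r (z ⊓ y) = μ₂ (z ⊓ y) := if_neg hc
          exact (min_le_right _ _).trans ((hρle y _ inf_le_right).trans (this ▸ hle))
  refine ⟨ρ, ⟨?_, ?_, ?_⟩, ?_⟩
  · -- bounds
    intro x
    constructor
    · exact hleρ x 0 (fun z _ => hr0 z)
    · exact (hρle x x le_rfl).trans (hr1 x)
  · -- antitone
    intro x y hxy
    exact hleρ x (ρ y) (fun z hz => hρle y z (hz.trans hxy))
  · -- fi₂
    intro x y
    exact hleρ _ _ (fun z hz => hkey z x y hz)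
  · -- universal property
    intro ν hν
    obtain ⟨hbν, haν, hiν⟩ := hν
    constructor
    · intro h x
      refine hleρ x (ν x) (fun z hz => ?_)
      have hνz : ν x ≤ ν z := haν _ _ hz
      by_cases hc : μ₁ z ≤ μ₂ z
      · rw [hr]; simp only [if_pos hc]
        exact (hbν x).2
      · have hrz : r z = μ₂ z := if_neg hc
        rw [hrz]
        refine hνz.trans ?_
        have hmin := h z
        rcases le_total (ν z) (μ₁ z) with h' | h'
        · rwa [min_comm, min_eq_left h'] at hmin
        · rw [min_eq_left h'] at hmin
          exact absurd hmin hc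
    · intro h x
      have hx : ν x ≤ r x := (h x).trans (hρle x x le_rfl)
      by_cases hc : μ₁ x ≤ μ₂ x
      · exact (min_le_left _ _).trans hc
      · have : r x = μ₂ x := if_neg hc
        exact (min_le_right _ _).trans (hx.trans (this ▸ le_rfl))
end

section
/- Let B be a finite Boolean algebra with exactly 2^n elements (n ≥ 2), and let I₁, …, Iₙ be its n lattice ideals of cardinality 2^{n−1}. Then the ℤ/2ℤ-valued characteristic functions c_{I₁}, …, c_{Iₙ} : B → ℤ/2ℤ are linearly independent over ℤ/2ℤ, and every nonzero element of their ℤ/2ℤ-linear span has Hamming weight exactly 2^{n−1} (i.e. exactly 2^{n−1} nonzero coordinates). Hence these codewords generate a Hadamard code of type [2^n, n, 2^{n−1}]₂: a binary linear code of length 2^n, dimension n and minimum distance 2^{n−1}. -/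
/-!
An ideal of a finite lattice is principal, `J = Iic t`, and `B ≃ Iic t × Iic tᶜ`; so an ideal
with half the elements of `B` has `|Iic tᶜ| = 2`, i.e. `J = {x | ¬ a ≤ x}` for the atom `a = tᶜ`.
Distinct ideals give distinct atoms `aᵢ`, and the translation `x ↦ x ∆ aⱼ` flips the codeword
of `Iⱼ` while fixing all others. Hence it adds `lⱼ` to the codeword `∑ lᵢ cᵢ`: evaluating a
vanishing combination shows `lⱼ = 0`, and when `lⱼ = 1` the translation swaps the zeros and the
ones of the codeword, which therefore has weight `|B| / 2`.
-/

open Function Set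

lemma isSimpleOrder_of_card_eq_two {α : Type*} [PartialOrder α] [BoundedOrder α] [Finite α]
    (h : Nat.card α = 2) : IsSimpleOrder α := by
  have : Nontrivial α := Finite.one_lt_card_iff_nontrivial.1 (by omega)
  refine ⟨fun a => ?_⟩
  by_contra! ha
  have := Fintype.ofFinite α
  have h3 := Fintype.two_lt_card_iff.2 ⟨⊥, a, ⊤, ha.1.symm, bot_ne_top, ha.2⟩
  rw [← Nat.card_eq_fintype_card] at h3
  omega

lemma Order.Ideal.exists_eq_principal {P : Type*} [SemilatticeSup P] [Finite P]
    (J : Order.Ideal P) : ∃ t, J = Order.Ideal.principal t := by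
  obtain ⟨t, ht⟩ := (Set.toFinite (J : Set P)).exists_maximal J.nonempty
  refine ⟨t, SetLike.ext fun x => ⟨fun hx => ?_, fun hx => J.lower hx ht.prop⟩⟩
  exact le_sup_left.trans (ht.le_of_ge (J.sup_mem hx ht.prop) le_sup_right)

section BooleanAlgebra

variable {B : Type*} [BooleanAlgebra B]

def equivIicProdIicCompl (t : B) : B ≃ Iic t × Iic tᶜ where
  toFun x := (⟨x ⊓ t, inf_le_right⟩, ⟨x ⊓ tᶜ, inf_le_right⟩)
  invFun p := p.1 ⊔ p.2
  left_inv x := by simp [← inf_sup_left]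
  right_inv := by
    rintro ⟨⟨u, hu : u ≤ t⟩, ⟨v, hv : v ≤ tᶜ⟩⟩
    ext
    · simp [inf_sup_right, inf_eq_left.2 hu, (le_compl_iff_disjoint_right.1 hv).eq_bot]
    · simp [inf_sup_right, inf_eq_left.2 hv, (disjoint_compl_right.mono_left hu).eq_bot]

lemma IsAtom.le_symmDiff_iff {a x y : B} (ha : IsAtom a) :
    a ≤ symmDiff x y ↔ ¬ (a ≤ x ↔ a ≤ y) := by
  simp only [← inf_eq_left (a := a), inf_symmDiff_distrib_left]
  rcases ha.le_iff.1 (inf_le_left : a ⊓ x ≤ a) with hx | hx <;>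
    rcases ha.le_iff.1 (inf_le_left : a ⊓ y ≤ a) with hy | hy <;>
    simp [hx, hy, ha.1.symm]

lemma Order.Ideal.exists_isAtom_coe_eq [Finite B] (J : Order.Ideal B)
    (hJ : Nat.card B = 2 * (J : Set B).ncard) : ∃ a, IsAtom a ∧ (J : Set B) = {x | ¬ a ≤ x} := by
  obtain ⟨t, rfl⟩ := J.exists_eq_principal
  have hJt : (Order.Ideal.principal t : Set B) = Iic t := by ext; simp
  have hprod := Nat.card_congr (equivIicProdIicCompl t)
  rw [Nat.card_prod, hJ, hJt, ← Nat.card_coe_set_eq] at hprod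
  have hpos : 0 < Nat.card (Iic t) := Nat.card_pos_iff.2 ⟨⟨⊥, bot_le⟩, inferInstance⟩
  have h2 : Nat.card (Iic tᶜ) = 2 := by
    have := Nat.eq_of_mul_eq_mul_left hpos (hprod.symm.trans (mul_comm _ _))
    omega
  have ha : IsAtom tᶜ := Set.isSimpleOrder_Iic_iff_isAtom.1 (isSimpleOrder_of_card_eq_two h2)
  refine ⟨tᶜ, ha, hJt.trans (Set.ext fun x => ?_)⟩
  show x ≤ t ↔ ¬ tᶜ ≤ x
  rw [ha.not_le_iff_disjoint, disjoint_comm, ← le_compl_iff_disjoint_right, compl_compl]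

lemma indicator_not_le_symmDiff [DecidableEq B] {a b : B} (ha : IsAtom a) (hb : IsAtom b) (x : B) :
    {y | ¬ b ≤ y}.indicator (fun _ => (1 : ZMod 2)) (symmDiff x a) =
      {y | ¬ b ≤ y}.indicator (fun _ => 1) x + if b = a then 1 else 0 := by
  classical
  have hba : b ≤ a ↔ b = a := ⟨fun h => (ha.le_iff.1 h).resolve_left hb.1, le_of_eq⟩
  simp only [indicator_apply, mem_ofPred_eq, hb.le_symmDiff_iff, hba]
  rcases eq_or_ne b a with rfl | hab
  · by_cases hx : b ≤ x
    · simp [hx]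
    · simp [hx]; decide
  · simp [hab]

lemma sum_smul_indicator_not_le_symmDiff [DecidableEq B] {ι : Type*} [Fintype ι]
    [DecidableEq ι] {a : ι → B} (ha : ∀ i, IsAtom (a i)) (ha_inj : Injective a) (l : ι → ZMod 2) (j : ι) (x : B) :
    (∑ i, l i • {y | ¬ a i ≤ y}.indicator (fun _ => (1 : ZMod 2))) (symmDiff x (a j)) =
      (∑ i, l i • {y | ¬ a i ≤ y}.indicator (fun _ => (1 : ZMod 2))) x + l j := by
  simp only [Finset.sum_apply, Pi.smul_apply, smul_eq_mul,
    indicator_not_le_symmDiff (ha j) (ha _), mul_add, Finset.sum_add_distrib, mul_ite, mul_one,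
    mul_zero, ha_inj.eq_iff, Finset.sum_ite_eq', Finset.mem_univ, if_true]

end BooleanAlgebra

lemma two_mul_card_ne_zero_of_involutive {α : Type*} [Finite α] {f : α → ZMod 2} {σ : α → α}
    (hσ : Involutive σ) (hf : ∀ x, f (σ x) = f x + 1) :
    2 * Nat.card {x // f x ≠ 0} = Nat.card α := by
  have hflip : ∀ z : ZMod 2, z ≠ 0 ↔ ¬ z + 1 ≠ 0 := by decide
  have hswap := Nat.card_congr <| (Involutive.toPerm σ hσ).subtypeEquiv
    (p := fun x => f x ≠ 0) (q := fun x => ¬ f x ≠ 0) fun x => by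
      rw [Involutive.coe_toPerm, hf]
      exact hflip (f x)
  have hsum := Nat.card_congr (Equiv.sumCompl fun x => f x ≠ 0)
  rw [Nat.card_sum] at hsum
  omega

theorem hadamard_code_of_boolean_ideals_general {B : Type*} [BooleanAlgebra B] [Fintype B]
    (n : ℕ) (hcard : Fintype.card B = 2 ^ n)
    (I : Fin n → Order.Ideal B) (hinj : Function.Injective I)
    (hIcard : ∀ i, ((I i : Set B)).ncard = 2 ^ (n - 1)) :
    LinearIndependent (ZMod 2)
        (fun i : Fin n => Set.indicator (I i : Set B) (fun _ => (1 : ZMod 2))) ∧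
      ∀ f : B → ZMod 2,
        f ∈ Submodule.span (ZMod 2)
            (Set.range fun i : Fin n =>
              Set.indicator (I i : Set B) (fun _ => (1 : ZMod 2))) →
          f ≠ 0 → Nat.card {x : B // f x ≠ 0} = 2 ^ (n - 1) := by
  classical
  have hcardB (i : Fin n) : Nat.card B = 2 * 2 ^ (n - 1) := by
    rw [Nat.card_eq_fintype_card, hcard, ← pow_succ', Nat.sub_add_cancel i.pos]
  have hatoms (i : Fin n) : ∃ a, IsAtom a ∧ (I i : Set B) = {x | ¬ a ≤ x} :=
    (I i).exists_isAtom_coe_eq (by rw [hIcard, hcardB i])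
  choose a ha hIa using hatoms
  have ha_inj : Injective a := fun i j h => hinj (SetLike.coe_injective (by rw [hIa, hIa, h]))
  have hshift := sum_smul_indicator_not_le_symmDiff ha ha_inj
  simp only [hIa]
  refine ⟨Fintype.linearIndependent_iff.2 fun g hg j => ?_, fun f hf hf0 => ?_⟩
  · have := hshift g j ⊥
    rw [hg] at this
    simpa using this.symm
  · obtain ⟨l, rfl⟩ := (Submodule.mem_span_range_iff_exists_fun _).1 hf
    obtain ⟨j, hj⟩ : ∃ j, l j ≠ 0 := by
      contrapose! hf0
      simp [hf0]
    have hlj : l j = 1 := Fin.eq_one_of_ne_zero _ hj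
    have := two_mul_card_ne_zero_of_involutive (fun x => symmDiff_symmDiff_cancel_right (a j) x)
      (fun x => (hshift l j x).trans (by rw [hlj]))
    have := hcardB j
    omega

theorem hadamard_code_of_boolean_ideals {B : Type*} [BooleanAlgebra B] [Fintype B]
    (n : ℕ) (hn : 2 ≤ n) (hcard : Fintype.card B = 2 ^ n)
    (I : Fin n → Order.Ideal B) (hinj : Function.Injective I)
    (hIcard : ∀ i, ((I i : Set B)).ncard = 2 ^ (n - 1)) :
    LinearIndependent (ZMod 2)
        (fun i : Fin n => Set.indicator (I i : Set B) (fun _ => (1 : ZMod 2))) ∧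
      ∀ f : B → ZMod 2,
        f ∈ Submodule.span (ZMod 2)
            (Set.range fun i : Fin n =>
              Set.indicator (I i : Set B) (fun _ => (1 : ZMod 2))) →
          f ≠ 0 → Nat.card {x : B // f x ≠ 0} = 2 ^ (n - 1) :=
  hadamard_code_of_boolean_ideals_general n hcard I hinj hIcard
end

section
/- For every n ≥ 2 there exist a Boolean algebra B with exactly 2^n elements, lattice ideals I₁, …, Iₙ of B each of cardinality 2^{n−1}, and a bijective enumeration e : {0, 1, …, 2^n − 1} → B, such that for every i ∈ {1, …, n} and every k ∈ {0, …, 2^n − 1}: e(k) ∈ Iᵢ if and only if ⌊k / 2^{n−i}⌋ is even. Consequently, the codewords c_{I₁}, …, c_{Iₙ} read along the enumeration e are exactly the rows of the Boolean form M_B of a generating matrix of the Hadamard code of type [2^n, n, 2^{n−1}]₂ (row i consists of 2^{n−i} ones, then 2^{n−i} zeros, alternating). -/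
/-- There are `n` lattice ideals of cardinality `2^(n-1)` in `B` together with a bijective
enumeration `e : Fin (2^n) ≃ B` along which the codeword of the `i`-th ideal (for
`i = 0, …, n-1`, corresponding to row `i+1`) is the alternating pattern of blocks of
`2^(n-1-i)` ones and `2^(n-1-i)` zeros, starting with ones:
`e k ∈ Iᵢ ↔ ⌊k / 2^(n-1-i)⌋` is even. -/
def HasBooleanFormHadamardIdeals (n : ℕ) (B : Type) [BooleanAlgebra B] [Fintype B] : Prop :=
  Fintype.card B = 2 ^ n ∧
    ∃ (I : Fin n → Order.Ideal B) (e : Fin (2 ^ n) ≃ B),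
      Function.Injective I ∧
      (∀ i, ((I i : Set B)).ncard = 2 ^ (n - 1)) ∧
      ∀ (i : Fin n) (k : Fin (2 ^ n)),
        e k ∈ I i ↔ Even ((k : ℕ) / 2 ^ (n - 1 - (i : ℕ)))

namespace HadamardAux

variable {n : ℕ}

/-- the generator of the `i`-th ideal: true everywhere except at `i`. -/
def g (i : Fin n) : Fin n → Bool := fun j => decide (j ≠ i)

lemma le_g_iff (i : Fin n) (f : Fin n → Bool) : f ≤ g i ↔ f i = false := by
  constructor
  · intro h
    have hi := h i
    rw [show g i i = false by simp [g]] at hi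
    revert hi
    cases f i <;> simp
  · intro h j
    by_cases hj : j = i
    · subst hj
      simp [g, h]
    · simp [g, hj]

lemma g_apply_self (i : Fin n) : g i i = false := by simp [g]

lemma g_apply_ne (i j : Fin n) (h : j ≠ i) : g i j = true := by simp [g, h]

/-- The set of functions vanishing at `i` is equivalent to functions on the complement. -/
def subEquiv (i : Fin n) : {f : Fin n → Bool // f i = false} ≃ ({j : Fin n // j ≠ i} → Bool) where
  toFun f j := f.1 j
  invFun gg := ⟨fun j => if h : j = i then false else gg ⟨j, h⟩, by simp⟩
  left_inv f := by
    ext j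
    by_cases h : j = i
    · subst h; simp [f.2]
    · simp [h]
  right_inv gg := by
    ext j
    simp [j.2]

lemma finTwoEquiv_eq_false_iff (x : Fin 2) : finTwoEquiv x = false ↔ (x : ℕ) = 0 := by
  revert x; decide

end HadamardAux

theorem exists_boolean_algebra_with_boolean_form_hadamard_matrix (n : ℕ) (hn : 2 ≤ n) :
    ∃ (B : Type) (_inst : BooleanAlgebra B) (_finst : Fintype B),
      HasBooleanFormHadamardIdeals n B := by
  refine ⟨Fin n → Bool, inferInstance, inferInstance, ?_, ?_⟩
  · simp
  refine ⟨fun i => Order.Ideal.principal (HadamardAux.g i),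
    finFunctionFinEquiv.symm.trans (Equiv.arrowCongr Fin.revPerm finTwoEquiv), ?_, ?_, ?_⟩
  · -- injectivity
    intro a b hab
    have hab' : Order.Ideal.principal (HadamardAux.g a) = Order.Ideal.principal (HadamardAux.g b) := hab
    have h1 : HadamardAux.g a ∈ Order.Ideal.principal (HadamardAux.g b) := by
      rw [← hab']; exact Order.Ideal.mem_principal.mpr le_rfl
    have h2 : HadamardAux.g a ≤ HadamardAux.g b := Order.Ideal.mem_principal.mp h1
    have h3 : HadamardAux.g a b = false := (HadamardAux.le_g_iff b _).mp h2
    by_contra hne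
    rw [HadamardAux.g_apply_ne a b (fun h => hne (h.symm))] at h3
    simp at h3
  · -- cardinality
    intro i
    have hset : ((Order.Ideal.principal (HadamardAux.g i) : Order.Ideal (Fin n → Bool)) : Set (Fin n → Bool))
        = {f | f i = false} := by
      ext f
      simpa [Order.Ideal.mem_principal] using HadamardAux.le_g_iff i f
    rw [hset, ← Nat.card_coe_set_eq]
    have : Nat.card {f : Fin n → Bool // f i = false}
        = Nat.card ({j : Fin n // j ≠ i} → Bool) := Nat.card_congr (HadamardAux.subEquiv i)
    have hcard : Fintype.card {j : Fin n // j ≠ i} = n - 1 := by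
      have := Fintype.card_subtype_compl (fun j : Fin n => j = i)
      simp only [Fintype.card_subtype_eq, Fintype.card_fin] at this
      exact this
    calc Nat.card {f : Fin n → Bool // f i = false}
        = Nat.card ({j : Fin n // j ≠ i} → Bool) := this
      _ = 2 ^ (n - 1) := by
          rw [Nat.card_eq_fintype_card, Fintype.card_fun, Fintype.card_bool, hcard]
  · -- codeword condition
    intro i k
    rw [Order.Ideal.mem_principal, HadamardAux.le_g_iff]
    have happ : (Equiv.arrowCongr Fin.revPerm finTwoEquiv) (finFunctionFinEquiv.symm k) i
        = finTwoEquiv (finFunctionFinEquiv.symm k (Fin.revPerm.symm i)) := rfl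
    simp only [Equiv.trans_apply, happ]
    rw [HadamardAux.finTwoEquiv_eq_false_iff, finFunctionFinEquiv_symm_apply_val]
    have hrev : ((Fin.revPerm.symm i : Fin n) : ℕ) = n - 1 - (i : ℕ) := by
      simp [Fin.val_rev]
      omega
    rw [hrev, Nat.even_iff]
end
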